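/- arXiv:2004.11715 — 4 statements merged into one kernel-verified Lean document; each statement's English description precedes it below -/
import Mathlib

section
/- Let G be a nilpotent group of class at most two, generated by elements g₁,…,g_m, whose commutator subgroup [G,G] has cardinality at most R. Then the subgroup A = ⋂_{i=1}^m {x ∈ G : [x, g_i] = 1} is abelian and has index at most R^m in G. -/
open scoped commutatorElement

/-!
The subgroup `A` is the centralizer of the generators, hence the centre. The map `x ↦ ⁅x, g⁆`
embeds `G ⧸ centralizer {g}` into the commutators, so `[G : A] ≤ ∏ i, [G : C(g i)] ≤ |G'| ^ m`.
If `G'` is infinite, `A` has infinite index: a centre of finite index leaves only finitely many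
commutators, and then Schur's theorem makes `G'` finite.
-/

namespace Subgroup

variable {G : Type*} [Group G]

theorem commutatorElement_mul_mem_center (x y : G) {z w : G} (hz : z ∈ center G)
    (hw : w ∈ center G) : ⁅x * z, y * w⁆ = ⁅x, y⁆ := by
  have hz' := mem_center_iff.mp hz
  have hw' := mem_center_iff.mp hw
  calc ⁅x * z, y * w⁆ = x * (z * (y * w)) * z⁻¹ * x⁻¹ * w⁻¹ * y⁻¹ := by group
    _ = x * y * (w * x⁻¹) * w⁻¹ * y⁻¹ := by rw [← hz' (y * w)]; group
    _ = ⁅x, y⁆ := by rw [← hw' x⁻¹]; group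

instance finite_commutatorSet_of_finiteIndex_center [(center G).FiniteIndex] :
    Finite (commutatorSet G) := by
  refine Set.Finite.to_subtype ((Set.finite_range
    fun p : (G ⧸ center G) × (G ⧸ center G) => ⁅p.1.out, p.2.out⁆).subset ?_)
  rintro _ ⟨x, y, rfl⟩
  obtain ⟨z, hz⟩ := QuotientGroup.mk_out_eq_mul (center G) x
  obtain ⟨w, hw⟩ := QuotientGroup.mk_out_eq_mul (center G) y
  exact ⟨(x, y), by simp only [hz, hw, commutatorElement_mul_mem_center x y z.2 w.2]⟩

theorem index_center_eq_zero_of_infinite_commutator [Infinite (_root_.commutator G)] :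
    (center G).index = 0 := by
  by_contra h
  have : (center G).FiniteIndex := ⟨h⟩
  exact not_finite (_root_.commutator G)

theorem index_centralizer_singleton_le [Finite (_root_.commutator G)] (g : G) :
    (centralizer {g}).index ≤ Nat.card (_root_.commutator G) := by
  have hsub : commutatorSet G ⊆ _root_.commutator G := commutator_eq_closure G ▸ subset_closure
  exact Nat.card_le_card_of_injective _
    ((quotientCentralizerEmbedding g).trans (Set.embeddingOfSubset _ _ hsub)).injective

theorem index_centralizer_range_le [Finite (_root_.commutator G)] {ι : Type*} [Fintype ι]
    (g : ι → G) :
    (centralizer (Set.range g)).index ≤ Nat.card (_root_.commutator G) ^ Fintype.card ι := by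
  rw [centralizer_eq_iInf, iInf_range]
  calc (⨅ i, centralizer {g i}).index ≤ ∏ i, (centralizer {g i}).index := index_iInf_le _
    _ ≤ ∏ _i : ι, Nat.card (_root_.commutator G) :=
      Finset.prod_le_prod' fun i _ => index_centralizer_singleton_le (g i)
    _ = Nat.card (_root_.commutator G) ^ Fintype.card ι := Finset.prod_const _

end Subgroup

theorem stmt_2_general (G : Type*) [Group G]
    (R m : ℕ) (g : Fin m → G) (hgen : Subgroup.closure (Set.range g) = ⊤)
    (hR : Nat.card (commutator G) ≤ R) :
    ∃ A : Subgroup G, (A : Set G) = {x : G | ∀ i : Fin m, ⁅x, g i⁆ = 1} ∧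
      (∀ a ∈ A, ∀ b ∈ A, a * b = b * a) ∧ A.index ≤ R ^ m := by
  have hcenter : Subgroup.centralizer (Set.range g) = Subgroup.center G := by
    rw [← Subgroup.centralizer_closure, hgen, Subgroup.coe_top, Subgroup.centralizer_univ]
  refine ⟨Subgroup.centralizer (Set.range g), ?_, ?_, ?_⟩
  · ext x
    simp [Subgroup.mem_centralizer_iff_commutator_eq_one']
  · rw [hcenter]
    exact fun a ha b _ => (Subgroup.mem_center_iff.mp ha b).symm
  · cases finite_or_infinite (commutator G)
    · calc (Subgroup.centralizer (Set.range g)).index ≤ Nat.card (commutator G) ^ m := by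
            simpa using Subgroup.index_centralizer_range_le g
        _ ≤ R ^ m := Nat.pow_le_pow_left hR m
    · rw [hcenter, Subgroup.index_center_eq_zero_of_infinite_commutator]
      exact Nat.zero_le _

/-- Let `G` be nilpotent of class at most two, generated by `g 0, …, g (m-1)`, with
commutator subgroup of cardinality at most `R`.  Then the subgroup
`A = ⋂ i, {x : ⁅x, g i⁆ = 1}` is abelian of index at most `R ^ m`. -/
theorem stmt_2 (G : Type*) [Group G] (hG : commutator G ≤ Subgroup.center G)
    (R m : ℕ) (g : Fin m → G) (hgen : Subgroup.closure (Set.range g) = ⊤)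
    (hR : Nat.card (commutator G) ≤ R) :
    ∃ A : Subgroup G, (A : Set G) = {x : G | ∀ i : Fin m, ⁅x, g i⁆ = 1} ∧
      (∀ a ∈ A, ∀ b ∈ A, a * b = b * a) ∧ A.index ≤ R ^ m :=
  stmt_2_general G R m g hgen hR
end

section
/- Let 1 → N → G → H → 1 be a short exact sequence of finite groups with |N| ≤ R and H abelian. Then the centralizer G₁ = C_G(N) has index at most R! in G and G₁ is nilpotent of class at most two. -/
open scoped commutatorElement

/-!
Conjugation makes `G` act on the normal subgroup `N` by automorphisms, and `C_G(N)` is the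
kernel of this action, so `G ⧸ C_G(N)` embeds in `Perm N` and the index is at most `|N|!`.
For `x, y` in `C_G(N)` the commutator `⁅x, y⁆` lies in `N`, which `C_G(N)` centralizes, so it is
central in `C_G(N)`.
-/

namespace Subgroup

variable {G : Type*} [Group G]

theorem ker_conjNormal (N : Subgroup G) [N.Normal] :
    (MulAut.conjNormal : G →* MulAut N).ker = centralizer (N : Set G) := by
  ext g
  simp only [MonoidHom.mem_ker, MulEquiv.ext_iff, MulAut.one_apply, Subtype.ext_iff,
    MulAut.conjNormal_apply, mem_centralizer_iff, Subtype.forall, SetLike.mem_coe]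
  exact forall₂_congr fun a _ ↦ by rw [mul_inv_eq_iff_eq_mul, eq_comm]

theorem index_centralizer_le_factorial (N : Subgroup G) [N.Normal] [Finite N] :
    (centralizer (N : Set G)).index ≤ (Nat.card N).factorial := by
  rw [← ker_conjNormal, index_ker]
  calc Nat.card (MulAut.conjNormal : G →* MulAut N).range
      ≤ Nat.card ((MulAut.conjNormal : G →* MulAut N).range.map (MulAut.toPerm N)) :=
        (card_map_of_injective MulEquiv.toEquiv_injective).ge
    _ ≤ Nat.card (Equiv.Perm N) := card_le_card_group _
    _ = (Nat.card N).factorial := Nat.card_perm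

theorem commutator_le_center_of_le_centralizer {H N : Subgroup G}
    (hHN : H ≤ centralizer (N : Set G)) (hcomm : ⁅H, H⁆ ≤ N) :
    _root_.commutator H ≤ center H := by
  rw [_root_.commutator, commutator_le]
  intro x _ y _
  rw [mem_center_iff]
  intro z
  ext
  exact (hHN z.2 _ (hcomm (commutator_mem_commutator x.2 y.2))).symm

end Subgroup

/-- Let `1 → N → G → H → 1` be a short exact sequence of finite groups with `|N| ≤ R` and
`H = G/N` abelian.  Then the centralizer `G₁ = C_G(N)` has index at most `R!` in `G` and
`G₁` is nilpotent of class at most two. -/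
theorem stmt_3 (G : Type*) [Group G] [Finite G] (R : ℕ)
    (N : Subgroup G) [N.Normal] (hN : Nat.card N ≤ R)
    (hab : ∀ x y : G, ⁅x, y⁆ ∈ N) :
    (Subgroup.centralizer (N : Set G)).index ≤ Nat.factorial R ∧
      commutator (Subgroup.centralizer (N : Set G)) ≤
        Subgroup.center (Subgroup.centralizer (N : Set G)) :=
  ⟨(N.index_centralizer_le_factorial).trans (Nat.factorial_le hN),
    Subgroup.commutator_le_center_of_le_centralizer le_rfl
      (Subgroup.commutator_le.2 fun x _ y _ => hab x y)⟩
end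

section
/- For all positive integers R and m there exists a constant E = E(R,m) such that: if G is a finite group with a normal subgroup N of cardinality at most R such that G/N is abelian, and every subgroup of G can be generated by at most m elements, then G contains an abelian subgroup of index at most E. -/
/-!
Let `C` be the centralizer of `N`; conjugation embeds `G / C` into `Perm N`, so `[G : C] ≤ |N|!`.
For `x ∈ G`, commutators `⁅x, y⁆` lie in `N`, which `C` centralizes, so `y ↦ ⁅x, y⁆` is a
homomorphism `C → N` with kernel `C_C(x)`; hence `[C : C_C(x)] ≤ |N|`. If `s` generates `C` with
`|s| ≤ m`, then `Z(C) = C ∩ C_G(s)` is abelian of index at most `|N|^m · |N|!` in `G`.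
-/

open scoped commutatorElement Nat

namespace Subgroup

variable {G : Type*} [Group G]

theorem index_centralizer_dvd_factorial (N : Subgroup G) [N.Normal] [Finite N] :
    (centralizer (N : Set G)).index ∣ (Nat.card N)! := by
  let conj : G →* Equiv.Perm N := (MulAut.toPerm N).comp MulAut.conjNormal
  have hker : conj.ker ≤ centralizer (N : Set G) := fun g hg n hn => by
    have hconj : g * n * g⁻¹ = n :=
      congrArg Subtype.val (DFunLike.congr_fun hg ⟨n, hn⟩ : conj g ⟨n, hn⟩ = ⟨n, hn⟩)
    calc n * g = g * n * g⁻¹ * g := by rw [hconj]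
      _ = g * n := by group
  calc (centralizer (N : Set G)).index ∣ conj.ker.index := index_dvd_of_le hker
    _ = Nat.card conj.range := index_ker conj
    _ ∣ Nat.card (Equiv.Perm N) := card_subgroup_dvd_card conj.range
    _ = (Nat.card N)! := Nat.card_perm

def commutatorLeftHom (x : G) {H N : Subgroup G} (hH : H ≤ centralizer (N : Set G))
    (hx : ∀ y ∈ H, ⁅x, y⁆ ∈ N) : H →* N where
  toFun y := ⟨⁅x, (y : G)⁆, hx y y.2⟩
  map_one' := by simp
  map_mul' y z := by
    have hconj : (y : G) * ⁅x, (z : G)⁆ * (y : G)⁻¹ = ⁅x, (z : G)⁆ := by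
      rw [← hH y.2 _ (hx z z.2), mul_inv_cancel_right]
    ext
    calc ⁅x, (y : G) * z⁆ = ⁅x, (y : G)⁆ * ((y : G) * ⁅x, (z : G)⁆ * (y : G)⁻¹) := by
          simp only [commutatorElement_def]; group
      _ = ⁅x, (y : G)⁆ * ⁅x, (z : G)⁆ := by rw [hconj]

theorem ker_commutatorLeftHom (x : G) {H N : Subgroup G} (hH : H ≤ centralizer (N : Set G))
    (hx : ∀ y ∈ H, ⁅x, y⁆ ∈ N) :
    (commutatorLeftHom x hH hx).ker = (centralizer {x}).subgroupOf H := by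
  ext y
  rw [MonoidHom.mem_ker, mem_subgroupOf, mem_centralizer_singleton_iff, Subtype.ext_iff]
  exact commutatorElement_eq_one_iff_mul_comm.trans eq_comm

theorem relIndex_centralizer_singleton_le_card (x : G) {H N : Subgroup G} [Finite N]
    (hH : H ≤ centralizer (N : Set G)) (hx : ∀ y ∈ H, ⁅x, y⁆ ∈ N) :
    (centralizer {x}).relIndex H ≤ Nat.card N := by
  rw [relIndex, ← ker_commutatorLeftHom x hH hx, index_ker]
  exact card_le_card_group _

theorem relIndex_centralizer_le_pow {H : Subgroup G} (s : Finset G) {k : ℕ}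
    (hs : ∀ x ∈ s, (centralizer {x}).relIndex H ≤ k) :
    (centralizer (s : Set G)).relIndex H ≤ k ^ s.card := by
  rw [centralizer_eq_iInf, ← iInf_subtype'']
  calc (⨅ x : (s : Set G), centralizer {(x : G)}).relIndex H
      ≤ ∏ x : (s : Set G), (centralizer {(x : G)}).relIndex H := relIndex_iInf_le _
    _ ≤ k ^ s.card := by
      simpa using Finset.prod_le_pow_card Finset.univ
        (fun x : (s : Set G) => (centralizer {(x : G)}).relIndex H) k fun x _ => hs x x.2

theorem exists_commute_index_le_of_closure_eq_centralizer {N : Subgroup G} [N.Normal] [Finite N]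
    (hcomm : ∀ x y : G, ⁅x, y⁆ ∈ N) {s : Finset G}
    (hs : closure (s : Set G) = centralizer (N : Set G)) :
    ∃ A : Subgroup G, (∀ a ∈ A, ∀ b ∈ A, a * b = b * a) ∧
      A.index ≤ Nat.card N ^ s.card * (Nat.card N)! := by
  set C := centralizer (N : Set G)
  have hcentralizer : centralizer (s : Set G) = centralizer C := by
    rw [← hs, centralizer_closure]
  refine ⟨C ⊓ centralizer (s : Set G), fun a ha b hb => ?_, ?_⟩
  · rw [hcentralizer] at hb
    exact hb.2 a ha.1
  · rw [← relIndex_mul_index inf_le_left, inf_relIndex_left]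
    gcongr
    · exact relIndex_centralizer_le_pow s fun x _ =>
        relIndex_centralizer_singleton_le_card x le_rfl fun y _ => hcomm x y
    · exact Nat.le_of_dvd (Nat.factorial_pos _) (index_centralizer_dvd_factorial N)

end Subgroup

theorem stmt_4_general (R m : ℕ) :
    ∃ E : ℕ, ∀ (G : Type) [Group G] [Finite G] (N : Subgroup G), N.Normal →
      Nat.card N ≤ R →
      (∀ x y : G, ⁅x, y⁆ ∈ N) →
      (∀ H : Subgroup G, ∃ s : Finset G, s.card ≤ m ∧ Subgroup.closure (s : Set G) = H) →
      ∃ A : Subgroup G, (∀ a ∈ A, ∀ b ∈ A, a * b = b * a) ∧ A.index ≤ E := by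
  refine ⟨R ^ m * R !, fun G _ _ N _ hcard hcomm hgen => ?_⟩
  obtain ⟨s, hs_card, hs⟩ := hgen (Subgroup.centralizer N)
  obtain ⟨A, hA, hindex⟩ := Subgroup.exists_commute_index_le_of_closure_eq_centralizer hcomm hs
  refine ⟨A, hA, hindex.trans ?_⟩
  have hpow : Nat.card N ^ s.card ≤ R ^ m :=
    calc Nat.card N ^ s.card ≤ Nat.card N ^ m := Nat.pow_le_pow_right Nat.card_pos hs_card
      _ ≤ R ^ m := Nat.pow_le_pow_left hcard m
  exact Nat.mul_le_mul hpow (Nat.factorial_le hcard)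

/-- For all positive integers `R` and `m` there is a constant `E = E(R,m)` such that:
any finite group `G` with a normal subgroup `N` of cardinality at most `R`, with `G/N`
abelian, and all of whose subgroups are generated by at most `m` elements, contains an
abelian subgroup of index at most `E`. -/
theorem stmt_4 (R m : ℕ) (hR : 0 < R) (hm : 0 < m) :
    ∃ E : ℕ, ∀ (G : Type) [Group G] [Finite G] (N : Subgroup G), N.Normal →
      Nat.card N ≤ R →
      (∀ x y : G, ⁅x, y⁆ ∈ N) →
      (∀ H : Subgroup G, ∃ s : Finset G, s.card ≤ m ∧ Subgroup.closure (s : Set G) = H) →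
      ∃ A : Subgroup G, (∀ a ∈ A, ∀ b ∈ A, a * b = b * a) ∧ A.index ≤ E :=
  stmt_4_general R m
end

section
/- For every finite group G there exists a characteristic abelian subgroup M ≤ G such that for every abelian subgroup A ≤ G one has [G : M] ≤ [G : A]². -/
/-!
Let `m(H) = |H| · |C_G(H)|` be the Chermak–Delgado measure. The product formula
`|H||K| ≤ |H ⊓ K||H ⊔ K|`, applied to `H, K` and to their centralizers, together with
`C(H) ⊓ C(K) = C(H ⊔ K)` and `C(H) ⊔ C(K) ≤ C(H ⊓ K)`, gives
`m(H) m(K) ≤ m(H ⊔ K) m(H ⊓ K)`.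
Hence the subgroups of maximal measure are closed under `⊓` and have a least element `M`,
which is characteristic since automorphisms preserve `m`. As `H ≤ C(C(H))`, `m(C(M)) ≥ m(M)`,
so `M ≤ C(M)`, i.e. `M` is abelian. Finally, for abelian `A`,
`|A|² ≤ m(A) ≤ m(M) ≤ |M||G|`, which is `[G : M] ≤ [G : A]²`.
-/

theorem InfClosed.exists_isLeast {α : Type*} [Lattice α] [WellFoundedLT α] {s : Set α}
    (hs : InfClosed s) (hne : s.Nonempty) : ∃ a, IsLeast s a := by
  obtain ⟨a, ha⟩ := exists_minimal_of_wellFoundedLT (· ∈ s) hne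
  exact ⟨a, ha.prop, fun b hb => ha.eq_of_le (hs ha.prop hb) inf_le_left ▸ inf_le_right⟩

namespace Subgroup

variable {G G' : Type*} [Group G] [Group G']

theorem card_inf_mul_relIndex (H K : Subgroup G) :
    Nat.card ↥(H ⊓ K) * H.relIndex K = Nat.card K := by
  rw [← inf_relIndex_right, ← relIndex_bot_left, ← relIndex_bot_left,
    relIndex_mul_relIndex _ _ _ bot_le inf_le_right]

theorem card_mul_card_le_card_inf_mul_card_sup [Finite G] (H K : Subgroup G) :
    Nat.card H * Nat.card K ≤ Nat.card ↥(H ⊓ K) * Nat.card ↥(H ⊔ K) := by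
  have hsup : Nat.card H * H.relIndex (H ⊔ K) = Nat.card ↥(H ⊔ K) := by
    simpa [inf_eq_left.mpr (le_sup_left : H ≤ H ⊔ K)] using card_inf_mul_relIndex H (H ⊔ K)
  rw [← card_inf_mul_relIndex H K, ← hsup, mul_left_comm]
  gcongr
  exact relIndex_le_of_le_right le_sup_right FiniteIndex.index_ne_zero

theorem index_le_index_sq_of_sq_card_le [Finite G] {M A : Subgroup G}
    (h : Nat.card A ^ 2 ≤ Nat.card M * Nat.card G) : M.index ≤ A.index ^ 2 := by
  refine Nat.le_of_mul_le_mul_right ?_ (pow_pos (Nat.card_pos (α := A)) 2)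
  calc M.index * Nat.card A ^ 2
      ≤ M.index * (Nat.card M * Nat.card G) := Nat.mul_le_mul_left _ h
    _ = (A.index * Nat.card A) ^ 2 := by
        rw [← mul_assoc, index_mul_card, index_mul_card, sq]
    _ = A.index ^ 2 * Nat.card A ^ 2 := mul_pow _ _ _

theorem centralizer_sup (H K : Subgroup G) :
    centralizer ((H ⊔ K : Subgroup G) : Set G) =
      centralizer (H : Set G) ⊓ centralizer (K : Set G) :=
  le_antisymm
    (le_inf (centralizer_le (le_sup_left : H ≤ H ⊔ K))
      (centralizer_le (le_sup_right : K ≤ H ⊔ K)))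
    (le_centralizer_iff.mpr
      (sup_le (le_centralizer_iff.mp inf_le_left) (le_centralizer_iff.mp inf_le_right)))

theorem centralizer_sup_centralizer_le (H K : Subgroup G) :
    centralizer (H : Set G) ⊔ centralizer (K : Set G) ≤
      centralizer ((H ⊓ K : Subgroup G) : Set G) :=
  sup_le (centralizer_le inf_le_left) (centralizer_le inf_le_right)

theorem map_equiv_centralizer (φ : G ≃* G') (H : Subgroup G) :
    (centralizer (H : Set G)).map φ.toMonoidHom = centralizer (H.map φ.toMonoidHom : Set G') := by
  ext g
  obtain ⟨x, rfl⟩ := φ.surjective g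
  simp [mem_centralizer_iff, ← map_mul]

noncomputable def chermakDelgadoMeasure (H : Subgroup G) : ℕ :=
  Nat.card H * Nat.card (centralizer (H : Set G))

theorem chermakDelgadoMeasure_pos [Finite G] (H : Subgroup G) : 0 < chermakDelgadoMeasure H :=
  Nat.mul_pos Nat.card_pos Nat.card_pos

theorem chermakDelgadoMeasure_mul_le [Finite G] (H K : Subgroup G) :
    chermakDelgadoMeasure H * chermakDelgadoMeasure K ≤
      chermakDelgadoMeasure (H ⊔ K) * chermakDelgadoMeasure (H ⊓ K) := by
  have hC := card_mul_card_le_card_inf_mul_card_sup (centralizer (H : Set G))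
    (centralizer (K : Set G))
  rw [← centralizer_sup] at hC
  calc chermakDelgadoMeasure H * chermakDelgadoMeasure K
      = (Nat.card H * Nat.card K) *
          (Nat.card (centralizer (H : Set G)) * Nat.card (centralizer (K : Set G))) := by
        unfold chermakDelgadoMeasure; ring
    _ ≤ (Nat.card ↥(H ⊓ K) * Nat.card ↥(H ⊔ K)) *
          (Nat.card (centralizer ((H ⊔ K : Subgroup G) : Set G)) *
            Nat.card (centralizer ((H ⊓ K : Subgroup G) : Set G))) := by
        refine Nat.mul_le_mul (card_mul_card_le_card_inf_mul_card_sup H K) (hC.trans ?_)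
        exact Nat.mul_le_mul_left _ (card_le_of_le (centralizer_sup_centralizer_le H K))
    _ = chermakDelgadoMeasure (H ⊔ K) * chermakDelgadoMeasure (H ⊓ K) := by
        unfold chermakDelgadoMeasure; ring

theorem chermakDelgadoMeasure_map_equiv (φ : G ≃* G') (H : Subgroup G) :
    chermakDelgadoMeasure (H.map φ.toMonoidHom) = chermakDelgadoMeasure H := by
  rw [chermakDelgadoMeasure, chermakDelgadoMeasure, ← map_equiv_centralizer,
    card_map_of_injective φ.injective, card_map_of_injective φ.injective]

theorem chermakDelgadoMeasure_le_centralizer [Finite G] (H : Subgroup G) :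
    chermakDelgadoMeasure H ≤ chermakDelgadoMeasure (centralizer (H : Set G)) := by
  rw [chermakDelgadoMeasure, chermakDelgadoMeasure, mul_comm]
  exact Nat.mul_le_mul_left _ (card_le_of_le fun _ hx => Set.subset_centralizer_centralizer hx)

theorem sq_card_le_chermakDelgadoMeasure [Finite G] {H : Subgroup G}
    (hH : H ≤ centralizer (H : Set G)) : Nat.card H ^ 2 ≤ chermakDelgadoMeasure H :=
  sq (Nat.card H) ▸ Nat.mul_le_mul_left _ (card_le_of_le hH)

theorem chermakDelgadoMeasure_le_card_mul_card [Finite G] (H : Subgroup G) :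
    chermakDelgadoMeasure H ≤ Nat.card H * Nat.card G :=
  Nat.mul_le_mul_left _ (card_le_card_group (centralizer (H : Set G)))

variable (G) in
def chermakDelgadoLattice : Set (Subgroup G) :=
  {H | ∀ K : Subgroup G, chermakDelgadoMeasure K ≤ chermakDelgadoMeasure H}

theorem mem_chermakDelgadoLattice {H : Subgroup G} :
    H ∈ chermakDelgadoLattice G ↔
      ∀ K : Subgroup G, chermakDelgadoMeasure K ≤ chermakDelgadoMeasure H :=
  Iff.rfl

theorem nonempty_chermakDelgadoLattice [Finite G] : (chermakDelgadoLattice G).Nonempty :=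
  Finite.exists_max chermakDelgadoMeasure

theorem infClosed_chermakDelgadoLattice [Finite G] : InfClosed (chermakDelgadoLattice G) := by
  intro H hH K hK
  refine mem_chermakDelgadoLattice.mpr fun L =>
    (hK L).trans (Nat.le_of_mul_le_mul_left ?_ (chermakDelgadoMeasure_pos H))
  calc chermakDelgadoMeasure H * chermakDelgadoMeasure K
      ≤ chermakDelgadoMeasure (H ⊔ K) * chermakDelgadoMeasure (H ⊓ K) :=
        chermakDelgadoMeasure_mul_le H K
    _ ≤ chermakDelgadoMeasure H * chermakDelgadoMeasure (H ⊓ K) :=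
        Nat.mul_le_mul_right _ (hH _)

theorem map_mem_chermakDelgadoLattice {H : Subgroup G} (hH : H ∈ chermakDelgadoLattice G)
    (φ : G ≃* G) : H.map φ.toMonoidHom ∈ chermakDelgadoLattice G := by
  simpa only [mem_chermakDelgadoLattice, chermakDelgadoMeasure_map_equiv] using hH

theorem centralizer_mem_chermakDelgadoLattice [Finite G] {H : Subgroup G}
    (hH : H ∈ chermakDelgadoLattice G) : centralizer (H : Set G) ∈ chermakDelgadoLattice G :=
  mem_chermakDelgadoLattice.mpr fun K => (hH K).trans (chermakDelgadoMeasure_le_centralizer H)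

theorem characteristic_of_isLeast {S : Set (Subgroup G)} {M : Subgroup G}
    (hS : ∀ H ∈ S, ∀ φ : G ≃* G, H.map φ.toMonoidHom ∈ S) (hM : IsLeast S M) :
    M.Characteristic := by
  refine characteristic_iff_map_eq.mpr fun φ => (hM.unique ⟨hS M hM.1 φ, fun H hH => ?_⟩).symm
  rw [map_le_iff_le_comap, comap_equiv_eq_map_symm']
  exact hM.2 (hS H hH φ.symm)

end Subgroup

/-- Chermak–Delgado: every finite group `G` has a characteristic abelian subgroup `M`
such that `[G : M] ≤ [G : A]²` for every abelian subgroup `A ≤ G`. -/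
theorem stmt_8 (G : Type*) [Group G] [Finite G] :
    ∃ M : Subgroup G, M.Characteristic ∧ (∀ a ∈ M, ∀ b ∈ M, a * b = b * a) ∧
      ∀ A : Subgroup G, (∀ a ∈ A, ∀ b ∈ A, a * b = b * a) → M.index ≤ A.index ^ 2 := by
  obtain ⟨M, hM⟩ := Subgroup.infClosed_chermakDelgadoLattice.exists_isLeast
    (Subgroup.nonempty_chermakDelgadoLattice (G := G))
  have hMC : M ≤ Subgroup.centralizer (M : Set G) :=
    hM.2 (Subgroup.centralizer_mem_chermakDelgadoLattice hM.1)
  refine ⟨M, Subgroup.characteristic_of_isLeast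
      (fun H hH => Subgroup.map_mem_chermakDelgadoLattice hH) hM,
    fun a ha b hb => hMC hb a ha, fun A hA => Subgroup.index_le_index_sq_of_sq_card_le ?_⟩
  calc Nat.card A ^ 2 ≤ A.chermakDelgadoMeasure :=
        Subgroup.sq_card_le_chermakDelgadoMeasure fun a ha b hb => hA b hb a ha
    _ ≤ M.chermakDelgadoMeasure := Subgroup.mem_chermakDelgadoLattice.mp hM.1 A
    _ ≤ Nat.card M * Nat.card G := M.chermakDelgadoMeasure_le_card_mul_card
end
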